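/- arXiv:1908.03939 — 6 statements merged into one kernel-verified Lean document; each statement's English description precedes it below -/
import Mathlib

section
/- Let k be an algebraically closed field of characteristic zero, and let L_1, ..., L_d (d ≥ 2) be pairwise linearly independent linear forms in R = k[x_0,...,x_n] with n ≥ 2. Let J be the Jacobian ideal of F = L_1 ⋯ L_d. Then the radical of J equals the intersection over all pairs i < j of the ideals (L_i, L_j). -/
open MvPolynomial

/-!
Each partial derivative of `F = ∏ Lᵢ` lies in `(Lᵢ, Lⱼ)`, since `F ∈ (Lᵢ, Lⱼ)²`, and `(Lᵢ, Lⱼ)` is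
prime: it is the kernel of the substitution `Xₘ ↦ P Xₘ` for a linear projection `P` of the
polynomial ring with kernel `k Lᵢ + k Lⱼ`. Conversely, by the Nullstellensatz it suffices
to show that every common zero `p` of the partials of `F` is a zero of two distinct `Lᵢ`. Euler's
identity gives `F(p) = 0`, so some `Lᵢ(p) = 0`; if no other `Lⱼ` vanished at `p`, then
`∂ₘF(p) = ∂ₘLᵢ · ∏_{j ≠ i} Lⱼ(p)` would force the constant gradient of `Lᵢ` to vanish,
i.e. `Lᵢ = 0`.
-/

theorem Derivation.map_mem_of_mem_sq {R A : Type*} [CommSemiring R] [CommSemiring A]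
    [Algebra R A] (D : Derivation R A A) {I : Ideal A} {x : A} (hx : x ∈ I ^ 2) : D x ∈ I := by
  rw [sq] at hx
  refine Submodule.mul_induction_on hx (fun a ha b hb => ?_) fun a b ha hb => ?_
  · rw [D.leibniz]
    exact add_mem (I.mul_mem_right _ ha) (I.mul_mem_right _ hb)
  · rw [map_add]
    exact add_mem ha hb

namespace MvPolynomial

variable {σ R : Type*} [CommRing R]

theorem span_range_pderiv_le_of_mem_sq {I : Ideal (MvPolynomial σ R)} {F : MvPolynomial σ R}
    (hF : F ∈ I ^ 2) : Ideal.span (Set.range fun m => pderiv m F) ≤ I :=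
  Ideal.span_le.2 <| Set.range_subset_iff.2 fun m => (pderiv m).map_mem_of_mem_sq hF

theorem prod_mem_span_pair_sq {ι : Type*} [Fintype ι] [DecidableEq ι] (L : ι → MvPolynomial σ R)
    {i j : ι} (hij : i ≠ j) : ∏ t, L t ∈ Ideal.span {L i, L j} ^ 2 := by
  have hdvd : L i * L j ∣ ∏ t, L t := by
    rw [← Finset.prod_pair hij]
    exact Finset.prod_dvd_prod_of_subset _ _ _ (Finset.subset_univ _)
  refine Ideal.mem_of_dvd _ hdvd ?_
  rw [sq]
  exact Ideal.mul_mem_mul (Ideal.subset_span (by simp)) (Ideal.subset_span (by simp))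

theorem IsHomogeneous.exists_pderiv_eq_C {φ : MvPolynomial σ R} (h : φ.IsHomogeneous 1) (m : σ) :
    ∃ c, pderiv m φ = C c :=
  ⟨_, totalDegree_eq_zero_iff_eq_C.1 ((totalDegree_zero_iff_isHomogeneous σ).2 h.pderiv)⟩

theorem IsHomogeneous.eq_zero_of_eval_pderiv_eq_zero [Fintype σ] {φ : MvPolynomial σ R}
    (h : φ.IsHomogeneous 1) (p : σ → R) (hp : ∀ m, eval p (pderiv m φ) = 0) : φ = 0 := by
  have hpderiv : ∀ m, pderiv m φ = 0 := fun m => by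
    obtain ⟨c, hc⟩ := h.exists_pderiv_eq_C m
    have hcm := hp m
    rw [hc, eval_C] at hcm
    rw [hc, hcm, C_0]
  simpa [hpderiv] using h.sum_X_mul_pderiv.symm

theorem IsHomogeneous.eval_eq_zero_of_eval_pderiv_eq_zero [Fintype σ] [IsDomain R] [CharZero R]
    {φ : MvPolynomial σ R} {n : ℕ} (h : φ.IsHomogeneous n) (hn : n ≠ 0) (p : σ → R)
    (hp : ∀ m, eval p (pderiv m φ) = 0) : eval p φ = 0 := by
  have euler := congrArg (eval p) h.sum_X_mul_pderiv
  simp only [map_sum, map_mul, hp, mul_zero, Finset.sum_const_zero, map_nsmul] at euler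
  exact (smul_eq_zero.1 euler.symm).resolve_left hn

theorem aeval_map_X_of_isHomogeneous_one {S : Type*} [CommRing S] [Algebra R S]
    (P : MvPolynomial σ R →ₗ[R] S) {φ : MvPolynomial σ R} (h : φ.IsHomogeneous 1) :
    aeval (fun m => P (X m)) φ = P φ := by
  have hφ : φ ∈ Submodule.span R (Set.range X) := by
    rw [← homogeneousSubmodule_one_eq_span_X]
    exact h
  refine LinearMap.eqOn_span (f := (aeval fun m => P (X m)).toLinearMap) ?_ hφ
  rintro _ ⟨m, rfl⟩
  simp

theorem sub_aeval_mem {I : Ideal (MvPolynomial σ R)} {g : σ → MvPolynomial σ R}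
    (hg : ∀ m, X m - g m ∈ I) (f : MvPolynomial σ R) : f - aeval g f ∈ I := by
  have hmk : (Ideal.Quotient.mkₐ R I).comp (aeval g) = Ideal.Quotient.mkₐ R I :=
    algHom_ext fun m => by simpa [Ideal.Quotient.eq] using (I.neg_mem_iff.2 (hg m))
  exact Ideal.Quotient.eq.1 (AlgHom.congr_fun hmk f).symm

theorem isPrime_span_range_of_linearIndependent {K ι : Type*} [Field K]
    {L : ι → MvPolynomial σ K} (hL : ∀ i, (L i).IsHomogeneous 1) (hind : LinearIndependent K L) :
    (Ideal.span (Set.range L)).IsPrime := by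
  obtain ⟨ψ, hψ⟩ :=
    (Finsupp.linearCombination K L).exists_leftInverse_of_injective (LinearMap.ker_eq_bot.2 hind)
  set P := LinearMap.id - Finsupp.linearCombination K L ∘ₗ ψ
  suffices Ideal.span (Set.range L) = RingHom.ker (aeval fun m => P (X m)) by
    rw [this]
    exact RingHom.ker_isPrime _
  refine le_antisymm (Ideal.span_le.2 ?_) fun f hf => ?_
  · rintro _ ⟨i, rfl⟩
    have hψL : ψ (L i) = Finsupp.single i 1 := by
      simpa using LinearMap.congr_fun hψ (Finsupp.single i 1)
    rw [SetLike.mem_coe, RingHom.mem_ker, aeval_map_X_of_isHomogeneous_one P (hL i)]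
    simp [P, hψL]
  · have hX : ∀ m, X m - P (X m) ∈ Ideal.span (Set.range L) := fun m => by
      have hXm : X m - P (X m) = Finsupp.linearCombination K L (ψ (X m)) := by simp [P]
      refine Submodule.span_le_restrictScalars K (MvPolynomial σ K) _ ?_
      rw [hXm, ← Finsupp.range_linearCombination]
      exact LinearMap.mem_range_self _ _
    have := sub_aeval_mem hX f
    rwa [RingHom.mem_ker.1 hf, sub_zero] at this

theorem exists_ne_eval_eq_zero_of_eval_pderiv_prod_eq_zero {ι : Type*} [Fintype ι] [DecidableEq ι]
    [Nonempty ι] [Fintype σ] [IsDomain R] [CharZero R] {L : ι → MvPolynomial σ R}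
    (hL : ∀ i, (L i).IsHomogeneous 1) (hL0 : ∀ i, L i ≠ 0) (p : σ → R)
    (hp : ∀ m, eval p (pderiv m (∏ i, L i)) = 0) :
    ∃ i j, i ≠ j ∧ eval p (L i) = 0 ∧ eval p (L j) = 0 := by
  have hF : (∏ i, L i).IsHomogeneous (Fintype.card ι) := by
    simpa using IsHomogeneous.prod Finset.univ L (fun _ => 1) fun i _ => hL i
  obtain ⟨i, -, hi⟩ := Finset.prod_eq_zero_iff.1 <| by
    simpa using hF.eval_eq_zero_of_eval_pderiv_eq_zero Fintype.card_ne_zero p hp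
  by_contra! hne
  refine hL0 i ((hL i).eq_zero_of_eval_pderiv_eq_zero p fun m => ?_)
  have hprod : eval p (∏ j ∈ Finset.univ.erase i, L j) ≠ 0 := by
    rw [map_prod, Finset.prod_ne_zero_iff]
    exact fun j hj => hne i j (Finset.ne_of_mem_erase hj).symm hi
  have := hp m
  rw [← Finset.mul_prod_erase _ L (Finset.mem_univ i), pderiv_mul, map_add, map_mul, map_mul, hi,
    zero_mul, add_zero] at this
  exact (mul_eq_zero.1 this).resolve_right hprod

end MvPolynomial

theorem radical_jacobian_eq_inf_pairs_general
    {k : Type*} [Field k] [IsAlgClosed k] [CharZero k] (n d : ℕ) (hd : 2 ≤ d)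
    (L : Fin d → MvPolynomial (Fin (n + 1)) k)
    (hdeg : ∀ i, (L i).IsHomogeneous 1)
    (hind : ∀ i j, i ≠ j → LinearIndependent k ![L i, L j]) :
    (Ideal.span (Set.range fun i => pderiv i (∏ i, L i))).radical =
      ⨅ (i : Fin d) (j : Fin d) (_ : i < j), Ideal.span {L i, L j} := by
  have : Nontrivial (Fin d) := Fin.nontrivial_iff_two_le.2 hd
  have hL0 (i : Fin d) : L i ≠ 0 := by
    obtain ⟨j, hj⟩ := exists_ne i
    simpa using (hind i j hj.symm).ne_zero 0
  have hprime (i j : Fin d) (hij : i ≠ j) : (Ideal.span {L i, L j}).IsPrime := by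
    simpa [Matrix.range_cons_cons_empty, Set.pair_comm] using
      isPrime_span_range_of_linearIndependent (Fin.forall_fin_two.2 ⟨hdeg i, hdeg j⟩) (hind i j hij)
  refine le_antisymm (le_iInf₂ fun i j => le_iInf fun hij => (hprime i j hij.ne).radical_le_iff.2
    (span_range_pderiv_le_of_mem_sq (prod_mem_span_pair_sq L hij.ne))) ?_
  rw [← vanishingIdeal_zeroLocus_eq_radical (K := k)]
  refine fun f hf => mem_vanishingIdeal_iff.2 fun p hp => ?_
  obtain ⟨i, j, hij, hi, hj⟩ := exists_ne_eval_eq_zero_of_eval_pderiv_prod_eq_zero hdeg hL0 p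
    fun m => hp _ (Ideal.subset_span ⟨m, rfl⟩)
  wlog hlt : i < j generalizing i j
  · exact this j i hij.symm hj hi (hij.lt_or_gt.resolve_left hlt)
  have hfij : f ∈ Ideal.span {L i, L j} := by
    simp only [Ideal.mem_iInf] at hf
    exact hf i j hlt
  have hker : Ideal.span {L i, L j} ≤ RingHom.ker (eval p) :=
    Ideal.span_le.2 <| Set.insert_subset_iff.2 ⟨hi, Set.singleton_subset_iff.2 hj⟩
  exact hker hfij

/-- Over an algebraically closed field of characteristic zero, the radical of the
Jacobian ideal of a product of `d ≥ 2` pairwise independent linear forms equals the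
intersection over pairs `i < j` of the ideals `(L i, L j)`. -/
theorem radical_jacobian_eq_inf_pairs
    {k : Type*} [Field k] [IsAlgClosed k] [CharZero k] (n d : ℕ) (hn : 2 ≤ n) (hd : 2 ≤ d)
    (L : Fin d → MvPolynomial (Fin (n + 1)) k)
    (hdeg : ∀ i, (L i).IsHomogeneous 1)
    (hind : ∀ i j, i ≠ j → LinearIndependent k ![L i, L j]) :
    (Ideal.span (Set.range fun i => pderiv i (∏ i, L i))).radical =
      ⨅ (i : Fin d) (j : Fin d) (_ : i < j), Ideal.span {L i, L j} :=
  radical_jacobian_eq_inf_pairs_general n d hd L hdeg hind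
end

section
/- Let R = k[x_0,...,x_n] be a standard graded polynomial ring, I_1, I_2 homogeneous ideals, and F_1 ∈ I_1, F_2 ∈ I_2 homogeneous polynomials of degrees d_1, d_2 forming a regular sequence. Then for every integer t, dim_k (F_2 I_1 + F_1 I_2)_t = dim_k (I_1)_{t−d_2} + dim_k (I_2)_{t−d_1} − dim_k R_{t−d_1−d_2}. -/
open MvPolynomial

/-- The dimension of the degree-`t` graded component of a (not necessarily homogeneous)
ideal `I` of `k[x₀,…,xₙ]`, i.e. of the space of homogeneous degree-`t` elements of `I`;
zero for negative `t`. -/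
noncomputable def gradedDim (k : Type*) [Field k] (n : ℕ)
    (I : Ideal (MvPolynomial (Fin (n + 1)) k)) (t : ℤ) : ℕ :=
  if 0 ≤ t then
    Module.finrank k
      ↥(Submodule.restrictScalars k I ⊓ homogeneousSubmodule (Fin (n + 1)) k t.toNat)
  else 0

namespace LiaisonAux

open Pointwise

theorem hc_mul {σ k : Type*} [CommSemiring k] {F : MvPolynomial σ k} {d : ℕ}
    (hF : F.IsHomogeneous d) (a : MvPolynomial σ k) (m : ℕ) :
    homogeneousComponent (d + m) (F * a) = F * homogeneousComponent m a := by
  classical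
  conv_lhs => rw [← sum_homogeneousComponent a, Finset.mul_sum, map_sum]
  have key : ∀ i ∈ Finset.range (a.totalDegree + 1),
      homogeneousComponent (d + m) (F * homogeneousComponent i a)
        = if i = m then F * homogeneousComponent i a else 0 := by
    intro i _
    rw [homogeneousComponent_of_mem ((hF.mul (homogeneousComponent_isHomogeneous i a)))]
    simp [Nat.add_right_cancel_iff, eq_comm]
  rw [Finset.sum_congr rfl key, Finset.sum_ite_eq' (Finset.range (a.totalDegree + 1))]
  split_ifs with h
  · rfl
  · rw [homogeneousComponent_eq_zero _ _ (by simpa using h), mul_zero]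

theorem hc_mul_lt {σ k : Type*} [CommSemiring k] {F : MvPolynomial σ k} {d : ℕ}
    (hF : F.IsHomogeneous d) (a : MvPolynomial σ k) {m : ℕ} (hm : m < d) :
    homogeneousComponent m (F * a) = 0 := by
  classical
  conv_lhs => rw [← sum_homogeneousComponent a, Finset.mul_sum, map_sum]
  refine Finset.sum_eq_zero fun i _ => ?_
  rw [homogeneousComponent_of_mem ((hF.mul (homogeneousComponent_isHomogeneous i a))), if_neg]
  omega

theorem reg_facts {R : Type*} [CommRing R] {F₁ F₂ : R}
    (hreg : RingTheory.Sequence.IsRegular R [F₁, F₂]) :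
    (∀ x y : R, F₁ * x = F₁ * y → x = y) ∧
    (∀ a y : R, F₂ * a = F₁ * y → ∃ c, a = F₁ * c) := by
  have hw := hreg.toIsWeaklyRegular
  rw [RingTheory.Sequence.isWeaklyRegular_cons_iff] at hw
  obtain ⟨hreg1, hw2⟩ := hw
  rw [RingTheory.Sequence.isWeaklyRegular_cons_iff] at hw2
  obtain ⟨hreg2, -⟩ := hw2
  constructor
  · intro x y h
    exact hreg1 (show F₁ • x = F₁ • y by simpa [smul_eq_mul] using h)
  · intro a y h
    have h0 : (Submodule.Quotient.mk (F₂ * a) : QuotSMulTop F₁ R) = 0 := by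
      rw [h, Submodule.Quotient.mk_eq_zero]
      exact Submodule.smul_mem_pointwise_smul y F₁ ⊤ trivial
    have h1 : (F₂ • (Submodule.Quotient.mk a : QuotSMulTop F₁ R)) = F₂ • 0 := by
      rw [smul_zero, ← Submodule.Quotient.mk_smul]
      simpa [smul_eq_mul] using h0
    have h2 := hreg2 h1
    rw [Submodule.Quotient.mk_eq_zero] at h2
    rw [← SetLike.mem_coe, Submodule.coe_pointwise_smul] at h2
    obtain ⟨c, -, rfl⟩ := h2
    exact ⟨c, rfl⟩

theorem homog_le_restrict {σ k : Type*} [Field k] (s : ℕ) :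
    homogeneousSubmodule σ k s ≤ restrictTotalDegree σ k s := fun p hp =>
  (mem_restrictTotalDegree σ s p).mpr ((mem_homogeneousSubmodule s p).mp hp).totalDegree_le

/-- The degree-`t` graded piece of `I` as a `k`-submodule; `⊥` for `t < 0`. -/
noncomputable def pieceZ (k : Type*) [Field k] (n : ℕ)
    (I : Ideal (MvPolynomial (Fin (n + 1)) k)) (t : ℤ) :
    Submodule k (MvPolynomial (Fin (n + 1)) k) :=
  if 0 ≤ t then
    Submodule.restrictScalars k I ⊓ homogeneousSubmodule (Fin (n + 1)) k t.toNat
  else ⊥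

theorem gradedDim_eq {k : Type*} [Field k] {n : ℕ}
    (I : Ideal (MvPolynomial (Fin (n + 1)) k)) (t : ℤ) :
    gradedDim k n I t = Module.finrank k (pieceZ k n I t) := by
  by_cases ht : 0 ≤ t
  · rw [gradedDim, if_pos ht, pieceZ, if_pos ht]
  · rw [gradedDim, if_neg ht, pieceZ, if_neg ht, finrank_bot]

theorem mem_pieceZ_of {k : Type*} [Field k] {n : ℕ}
    {I : Ideal (MvPolynomial (Fin (n + 1)) k)} {t : ℤ} (ht : 0 ≤ t)
    {x : MvPolynomial (Fin (n + 1)) k} (hI : x ∈ I) (hx : x.IsHomogeneous t.toNat) :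
    x ∈ pieceZ k n I t := by
  rw [pieceZ, if_pos ht]
  exact ⟨hI, hx⟩

theorem mem_pieceZ_elim {k : Type*} [Field k] {n : ℕ}
    {I : Ideal (MvPolynomial (Fin (n + 1)) k)} {t : ℤ} (ht : 0 ≤ t)
    {x : MvPolynomial (Fin (n + 1)) k} (hx : x ∈ pieceZ k n I t) :
    x ∈ I ∧ x.IsHomogeneous t.toNat := by
  rw [pieceZ, if_pos ht] at hx
  exact hx

theorem eq_zero_of_mem_pieceZ_neg {k : Type*} [Field k] {n : ℕ}
    {I : Ideal (MvPolynomial (Fin (n + 1)) k)} {t : ℤ} (ht : t < 0)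
    {x : MvPolynomial (Fin (n + 1)) k} (hx : x ∈ pieceZ k n I t) : x = 0 := by
  rw [pieceZ, if_neg (by omega)] at hx
  simpa using hx

theorem pieceZ_le {k : Type*} [Field k] {n : ℕ}
    (I : Ideal (MvPolynomial (Fin (n + 1)) k)) (t : ℤ) :
    pieceZ k n I t ≤ restrictTotalDegree (Fin (n + 1)) k t.toNat := by
  unfold pieceZ
  split_ifs
  · exact le_trans inf_le_right (homog_le_restrict _)
  · exact bot_le

instance pieceZ_findim {k : Type*} [Field k] {n : ℕ}
    (I : Ideal (MvPolynomial (Fin (n + 1)) k)) (t : ℤ) :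
    FiniteDimensional k ↥(pieceZ k n I t) :=
  Submodule.finiteDimensional_of_le (pieceZ_le I t)

end LiaisonAux

open LiaisonAux

set_option maxHeartbeats 2000000 in
set_option synthInstance.maxHeartbeats 200000 in
/-- Hilbert-function identity for liaison addition:
`dim (F₂I₁ + F₁I₂)_t = dim (I₁)_{t-d₂} + dim (I₂)_{t-d₁} - dim R_{t-d₁-d₂}`. -/
theorem liaison_addition_hilbert_function
    {k : Type*} [Field k] (n : ℕ)
    (I₁ I₂ : Ideal (MvPolynomial (Fin (n + 1)) k))
    (hhom1 : ∀ p ∈ I₁, ∀ m : ℕ, homogeneousComponent m p ∈ I₁)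
    (hhom2 : ∀ p ∈ I₂, ∀ m : ℕ, homogeneousComponent m p ∈ I₂)
    (F₁ F₂ : MvPolynomial (Fin (n + 1)) k) (d₁ d₂ : ℕ)
    (h1 : F₁ ∈ I₁) (h2 : F₂ ∈ I₂)
    (hd1 : F₁.IsHomogeneous d₁) (hd2 : F₂.IsHomogeneous d₂)
    (hreg : RingTheory.Sequence.IsRegular (MvPolynomial (Fin (n + 1)) k) [F₁, F₂]) :
    ∀ t : ℤ,
      gradedDim k n (Ideal.span {F₂} * I₁ + Ideal.span {F₁} * I₂) t +
          gradedDim k n ⊤ (t - d₁ - d₂) =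
        gradedDim k n I₁ (t - d₂) + gradedDim k n I₂ (t - d₁) := by
  classical
  intro t
  obtain ⟨hcancel, hdvd⟩ := reg_facts hreg
  set J : Ideal (MvPolynomial (Fin (n + 1)) k) :=
    Ideal.span {F₂} * I₁ + Ideal.span {F₁} * I₂ with hJ
  -- the graded pieces
  set A := pieceZ k n I₁ (t - d₂) with hA
  set B := pieceZ k n I₂ (t - d₁) with hB
  set C := pieceZ k n ⊤ (t - d₁ - d₂) with hC
  set D := pieceZ k n J t with hD
  -- the linear map (a, b) ↦ F₂ a + F₁ b
  set Φ : (A × B) →ₗ[k] MvPolynomial (Fin (n + 1)) k :=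
    { toFun := fun p => F₂ * (p.1 : MvPolynomial (Fin (n + 1)) k)
        + F₁ * (p.2 : MvPolynomial (Fin (n + 1)) k)
      map_add' := fun p q => by
        simp only [Submodule.coe_add, Prod.fst_add, Prod.snd_add]
        ring
      map_smul' := fun c p => by
        simp only [Prod.smul_fst, Prod.smul_snd, SetLike.val_smul, RingHom.id_apply,
          smul_add, mul_smul_comm] } with hΦ
  -- the range of Φ is the degree-t piece of J
  have hrange : LinearMap.range Φ = D := by
    apply le_antisymm
    · rintro _ ⟨⟨⟨a, ha⟩, ⟨b, hb⟩⟩, rfl⟩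
      show F₂ * a + F₁ * b ∈ D
      refine add_mem ?_ ?_
      · by_cases h : 0 ≤ t - (d₂ : ℤ)
        · obtain ⟨haI, hah⟩ := mem_pieceZ_elim h ha
          refine mem_pieceZ_of (by omega) ?_ ?_
          · exact Submodule.mem_sup_left (Ideal.mem_span_singleton_mul.mpr ⟨a, haI, rfl⟩)
          · have hdeg : d₂ + (t - (d₂ : ℤ)).toNat = t.toNat := by omega
            exact hdeg ▸ hd2.mul hah
        · have ha0 : a = 0 := eq_zero_of_mem_pieceZ_neg (by omega) ha
          rw [ha0, mul_zero]
          exact zero_mem _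
      · by_cases h : 0 ≤ t - (d₁ : ℤ)
        · obtain ⟨hbI, hbh⟩ := mem_pieceZ_elim h hb
          refine mem_pieceZ_of (by omega) ?_ ?_
          · exact Submodule.mem_sup_right (Ideal.mem_span_singleton_mul.mpr ⟨b, hbI, rfl⟩)
          · have hdeg : d₁ + (t - (d₁ : ℤ)).toNat = t.toNat := by omega
            exact hdeg ▸ hd1.mul hbh
        · have hb0 : b = 0 := eq_zero_of_mem_pieceZ_neg (by omega) hb
          rw [hb0, mul_zero]
          exact zero_mem _
    · intro G hG
      by_cases ht : 0 ≤ t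
      · obtain ⟨hGJ, hGh⟩ := mem_pieceZ_elim ht hG
        rw [hJ, Submodule.add_eq_sup, Submodule.mem_sup] at hGJ
        obtain ⟨p, hp, q, hq, hpq⟩ := hGJ
        obtain ⟨a₀, ha₀, rfl⟩ := Ideal.mem_span_singleton_mul.mp hp
        obtain ⟨b₀, hb₀, rfl⟩ := Ideal.mem_span_singleton_mul.mp hq
        set s := t.toNat with hs
        set a : MvPolynomial (Fin (n + 1)) k :=
          if d₂ ≤ s then homogeneousComponent (s - d₂) a₀ else 0 with ha
        set b : MvPolynomial (Fin (n + 1)) k :=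
          if d₁ ≤ s then homogeneousComponent (s - d₁) b₀ else 0 with hb
        have key : F₂ * a + F₁ * b = G := by
          have hGc : homogeneousComponent s G = G := by
            rw [homogeneousComponent_of_mem hGh, if_pos rfl]
          calc F₂ * a + F₁ * b
              = homogeneousComponent s (F₂ * a₀) + homogeneousComponent s (F₁ * b₀) := by
                congr 1
                · rw [ha]
                  split_ifs with h
                  · rw [← hc_mul hd2 a₀ (s - d₂), Nat.add_sub_cancel' h]
                  · rw [mul_zero, hc_mul_lt hd2 a₀ (by omega)]
                · rw [hb]
                  split_ifs with h
                  · rw [← hc_mul hd1 b₀ (s - d₁), Nat.add_sub_cancel' h]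
                  · rw [mul_zero, hc_mul_lt hd1 b₀ (by omega)]
            _ = homogeneousComponent s (F₂ * a₀ + F₁ * b₀) := by rw [map_add]
            _ = G := by rw [hpq, hGc]
        have hAmem : a ∈ A := by
          rw [ha]
          split_ifs with h
          · refine mem_pieceZ_of (by omega) (hhom1 a₀ ha₀ _) ?_
            have hh : (t - (d₂ : ℤ)).toNat = s - d₂ := by omega
            rw [hh]
            exact homogeneousComponent_isHomogeneous _ _
          · exact zero_mem _
        have hBmem : b ∈ B := by
          rw [hb]
          split_ifs with h
          · refine mem_pieceZ_of (by omega) (hhom2 b₀ hb₀ _) ?_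
            have hh : (t - (d₁ : ℤ)).toNat = s - d₁ := by omega
            rw [hh]
            exact homogeneousComponent_isHomogeneous _ _
          · exact zero_mem _
        exact ⟨(⟨a, hAmem⟩, ⟨b, hBmem⟩), key⟩
      · have hG0 : G = 0 := eq_zero_of_mem_pieceZ_neg (by omega) hG
        rw [hG0]
        exact zero_mem _
  -- the map c ↦ (F₁ c, -F₂ c) from C to A × B
  have hAofC : ∀ c : C, F₁ * (c : MvPolynomial (Fin (n + 1)) k) ∈ A := by
    rintro ⟨c, hc⟩
    show F₁ * c ∈ A
    by_cases h : 0 ≤ t - (d₁ : ℤ) - (d₂ : ℤ)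
    · obtain ⟨-, hch⟩ := mem_pieceZ_elim h hc
      refine mem_pieceZ_of (by omega) (Ideal.mul_mem_right c _ h1) ?_
      have hdeg : d₁ + (t - (d₁ : ℤ) - (d₂ : ℤ)).toNat = (t - (d₂ : ℤ)).toNat := by omega
      exact hdeg ▸ hd1.mul hch
    · have hc0 : c = 0 := eq_zero_of_mem_pieceZ_neg (by omega) hc
      rw [hc0, mul_zero]
      exact zero_mem _
  have hBofC : ∀ c : C, -(F₂ * (c : MvPolynomial (Fin (n + 1)) k)) ∈ B := by
    rintro ⟨c, hc⟩
    show -(F₂ * c) ∈ B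
    by_cases h : 0 ≤ t - (d₁ : ℤ) - (d₂ : ℤ)
    · obtain ⟨-, hch⟩ := mem_pieceZ_elim h hc
      refine neg_mem (mem_pieceZ_of (by omega) (Ideal.mul_mem_right c _ h2) ?_)
      have hdeg : d₂ + (t - (d₁ : ℤ) - (d₂ : ℤ)).toNat = (t - (d₁ : ℤ)).toNat := by omega
      exact hdeg ▸ hd2.mul hch
    · have hc0 : c = 0 := eq_zero_of_mem_pieceZ_neg (by omega) hc
      rw [hc0, mul_zero, neg_zero]
      exact zero_mem _
  set Ψ : C →ₗ[k] (A × B) :=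
    { toFun := fun c => (⟨F₁ * (c : MvPolynomial (Fin (n + 1)) k), hAofC c⟩,
        ⟨-(F₂ * (c : MvPolynomial (Fin (n + 1)) k)), hBofC c⟩)
      map_add' := fun c c' => by
        refine Prod.ext (Subtype.ext ?_) (Subtype.ext ?_) <;>
          simp [mul_add, neg_add] <;> ring
      map_smul' := fun r c => by
        refine Prod.ext (Subtype.ext ?_) (Subtype.ext ?_) <;>
          simp [mul_smul_comm] } with hΨ
  have hΨker : ∀ c : C, Ψ c ∈ LinearMap.ker Φ := by
    intro c
    rw [LinearMap.mem_ker]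
    show F₂ * (F₁ * (c : MvPolynomial (Fin (n + 1)) k))
      + F₁ * -(F₂ * (c : MvPolynomial (Fin (n + 1)) k)) = 0
    ring
  set Ψ' : C →ₗ[k] ↥(LinearMap.ker Φ) := Ψ.codRestrict _ hΨker with hΨ'
  have hinj : Function.Injective Ψ' := by
    intro c c' h
    have h1' : F₁ * (c : MvPolynomial (Fin (n + 1)) k)
        = F₁ * (c' : MvPolynomial (Fin (n + 1)) k) :=
      congrArg (fun p => (((p : ↥(LinearMap.ker Φ)) : A × B).1
        : MvPolynomial (Fin (n + 1)) k)) h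
    exact Subtype.ext (hcancel _ _ h1')
  have hsurj : Function.Surjective Ψ' := by
    rintro ⟨⟨⟨a, ha⟩, ⟨b, hb⟩⟩, hker⟩
    rw [LinearMap.mem_ker] at hker
    have hker' : F₂ * a + F₁ * b = 0 := hker
    by_cases haz : a = 0
    · have hb0 : b = 0 := by
        refine hcancel b 0 ?_
        rw [mul_zero]
        rw [haz, mul_zero, zero_add] at hker'
        exact hker'
      refine ⟨⟨0, zero_mem _⟩, ?_⟩
      apply Subtype.ext
      refine Prod.ext (Subtype.ext ?_) (Subtype.ext ?_)
      · show F₁ * (0 : MvPolynomial (Fin (n + 1)) k) = a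
        rw [mul_zero, haz]
      · show -(F₂ * (0 : MvPolynomial (Fin (n + 1)) k)) = b
        rw [mul_zero, neg_zero, hb0]
    · have h0td₂ : 0 ≤ t - (d₂ : ℤ) := by
        by_contra h
        exact haz (eq_zero_of_mem_pieceZ_neg (by omega) ha)
      obtain ⟨haI, hah⟩ := mem_pieceZ_elim h0td₂ ha
      set m := (t - (d₂ : ℤ)).toNat with hm
      have hFa : F₂ * a = F₁ * (-b) := by linear_combination hker'
      obtain ⟨c₀, hc₀⟩ := hdvd a (-b) hFa
      have hd₁m : d₁ ≤ m := by
        by_contra hlt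
        push_neg at hlt
        have haa : homogeneousComponent m a = a := by
          rw [homogeneousComponent_of_mem hah, if_pos rfl]
        rw [hc₀, hc_mul_lt hd1 c₀ hlt] at haa
        exact haz (hc₀.trans haa.symm)
      set c : MvPolynomial (Fin (n + 1)) k := homogeneousComponent (m - d₁) c₀ with hcdef
      have hF₁c : F₁ * c = a := by
        have h' := hc_mul hd1 c₀ (m - d₁)
        rw [Nat.add_sub_cancel' hd₁m] at h'
        have haa : homogeneousComponent m a = a := by
          rw [homogeneousComponent_of_mem hah, if_pos rfl]
        rw [hcdef, ← h', ← hc₀, haa]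
      have hbc : b = -(F₂ * c) := by
        refine hcancel b _ ?_
        linear_combination hker' + F₂ * hF₁c
      have hCmem : c ∈ C := by
        refine mem_pieceZ_of (by omega) trivial ?_
        have hh : (t - (d₁ : ℤ) - (d₂ : ℤ)).toNat = m - d₁ := by omega
        rw [hh]
        exact homogeneousComponent_isHomogeneous _ _
      refine ⟨⟨c, hCmem⟩, ?_⟩
      apply Subtype.ext
      refine Prod.ext (Subtype.ext ?_) (Subtype.ext ?_)
      · show F₁ * c = a
        exact hF₁c
      · show -(F₂ * c) = b
        exact hbc.symm
  have e : C ≃ₗ[k] ↥(LinearMap.ker Φ) := LinearEquiv.ofBijective Ψ' ⟨hinj, hsurj⟩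
  have hCker : Module.finrank k C = Module.finrank k ↥(LinearMap.ker Φ) := e.finrank_eq
  have rn := LinearMap.finrank_range_add_finrank_ker Φ
  rw [hrange] at rn
  rw [Module.finrank_prod] at rn
  rw [gradedDim_eq, gradedDim_eq, gradedDim_eq, gradedDim_eq]
  rw [← hA, ← hB, ← hC, ← hD]
  omega
end

section
/- Let R be a commutative Noetherian ring, I_1, I_2 ideals, and F_1 ∈ I_1, F_2 ∈ I_2. Then the radical of the liaison addition ideal F_2 I_1 + F_1 I_2 equals √I_1 ∩ √I_2 ∩ √(F_1, F_2). -/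
/-!
Since `Fᵢ ∈ Iᵢ`, the ideal `J = F₂I₁ + F₁I₂` lies in `I₁`, in `I₂` and in `(F₁, F₂)`.
Conversely `I₁I₂(F₁, F₂) = F₁I₁I₂ + F₂I₁I₂ ⊆ J`, and the radical of a product is the
intersection of the radicals.
-/

namespace Ideal

variable {R : Type*} [CommSemiring R]

def liaisonAddition (I₁ I₂ : Ideal R) (F₁ F₂ : R) : Ideal R :=
  span {F₂} * I₁ + span {F₁} * I₂

theorem liaisonAddition_le_inf {I₁ I₂ : Ideal R} {F₁ F₂ : R} (h₁ : F₁ ∈ I₁) (h₂ : F₂ ∈ I₂) :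
    liaisonAddition I₁ I₂ F₁ F₂ ≤ I₁ ⊓ I₂ ⊓ span {F₁, F₂} := by
  have hF₁ : span {F₁} ≤ I₁ := (span_singleton_le_iff_mem _).2 h₁
  have hF₂ : span {F₂} ≤ I₂ := (span_singleton_le_iff_mem _).2 h₂
  have hF₁_pair : span {F₁} ≤ span {F₁, F₂} := span_mono (by simp)
  have hF₂_pair : span {F₂} ≤ span {F₁, F₂} := span_mono (by simp)
  refine sup_le (le_inf (le_inf mul_le_right ?_) ?_) (le_inf (le_inf ?_ mul_le_right) ?_)
  · exact mul_le_left.trans hF₂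
  · exact mul_le_left.trans hF₂_pair
  · exact mul_le_left.trans hF₁
  · exact mul_le_left.trans hF₁_pair

theorem mul_mul_span_pair_le_liaisonAddition (I₁ I₂ : Ideal R) (F₁ F₂ : R) :
    I₁ * I₂ * span {F₁, F₂} ≤ liaisonAddition I₁ I₂ F₁ F₂ := by
  rw [span_insert, mul_sup, liaisonAddition, add_eq_sup, sup_comm]
  refine sup_le_sup ?_ ?_
  · calc I₁ * I₂ * span {F₂} = span {F₂} * I₁ * I₂ := by ring
      _ ≤ span {F₂} * I₁ := mul_le_left
  · calc I₁ * I₂ * span {F₁} = I₁ * (span {F₁} * I₂) := by ring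
      _ ≤ span {F₁} * I₂ := mul_le_right

end Ideal

theorem radical_liaison_addition_general
    {R : Type*} [CommRing R]
    (I₁ I₂ : Ideal R) (F₁ F₂ : R) (h1 : F₁ ∈ I₁) (h2 : F₂ ∈ I₂) :
    (Ideal.span {F₂} * I₁ + Ideal.span {F₁} * I₂).radical =
      I₁.radical ⊓ I₂.radical ⊓ (Ideal.span {F₁, F₂}).radical := by
  refine le_antisymm ?_ ?_
  · rw [← Ideal.radical_inf, ← Ideal.radical_inf]
    exact Ideal.radical_mono (Ideal.liaisonAddition_le_inf h1 h2)
  · rw [← Ideal.radical_mul, ← Ideal.radical_mul]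
    exact Ideal.radical_mono (Ideal.mul_mul_span_pair_le_liaisonAddition I₁ I₂ F₁ F₂)

/-- The radical of the liaison addition ideal `F₂I₁ + F₁I₂` is `√I₁ ∩ √I₂ ∩ √(F₁,F₂)`. -/
theorem radical_liaison_addition
    {R : Type*} [CommRing R] [IsNoetherianRing R]
    (I₁ I₂ : Ideal R) (F₁ F₂ : R) (h1 : F₁ ∈ I₁) (h2 : F₂ ∈ I₂) :
    (Ideal.span {F₂} * I₁ + Ideal.span {F₁} * I₂).radical =
      I₁.radical ⊓ I₂.radical ⊓ (Ideal.span {F₁, F₂}).radical :=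
  radical_liaison_addition_general I₁ I₂ F₁ F₂ h1 h2
end

section
/- Let R be a commutative ring, I_1 an ideal, and F_1 ∈ I_1, F_2 ∈ R such that (F_1, F_2) is a regular sequence. Then the colon ideal (F_2 I_1 + (F_1)) : F_2 equals I_1. -/
open Pointwise



private lemma mem_rsmul_top_iff {R : Type*} [CommRing R] (r x : R) :
    x ∈ r • (⊤ : Submodule R R) ↔ ∃ c, r * c = x := by
  constructor
  · intro h
    rw [← SetLike.mem_coe, Submodule.coe_pointwise_smul, Set.mem_smul_set] at h
    obtain ⟨y, -, hy⟩ := h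
    exact ⟨y, hy⟩
  · rintro ⟨c, rfl⟩
    exact Submodule.smul_mem_pointwise_smul c r ⊤ trivial

/-- For a basic double link `F₂I₁ + (F₁)` with `F₁ ∈ I₁` and `(F₁,F₂)` a regular
sequence, the colon ideal by `F₂` recovers `I₁`. -/
theorem basic_double_link_colon
    {R : Type*} [CommRing R] (I₁ : Ideal R) (F₁ F₂ : R) (h1 : F₁ ∈ I₁)
    (hreg : RingTheory.Sequence.IsWeaklyRegular R [F₁, F₂]) :
    (Ideal.span {F₂} * I₁ + Ideal.span {F₁}).colon (Ideal.span {F₂}) = I₁ := by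
  rw [RingTheory.Sequence.isWeaklyRegular_cons_iff] at hreg
  obtain ⟨-, hrest⟩ := hreg
  rw [RingTheory.Sequence.isWeaklyRegular_cons_iff] at hrest
  obtain ⟨hF₂, -⟩ := hrest
  apply le_antisymm
  · intro x hx
    have hx2 : x * F₂ ∈ Ideal.span {F₂} * I₁ + Ideal.span {F₁} :=
      Submodule.mem_colon.mp hx F₂ (Ideal.mem_span_singleton_self F₂)
    obtain ⟨y, hy, z, hz, hyz⟩ := Submodule.mem_sup.mp hx2
    obtain ⟨a, ha, rfl⟩ := Ideal.mem_span_singleton_mul.mp hy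
    -- z = (x - a) * F₂
    have hz' : (x - a) * F₂ = z := by ring_nf; linear_combination -hyz
    -- x - a ∈ span {F₁} since F₂ is regular mod F₁
    have hmem : x - a ∈ (F₁ • (⊤ : Submodule R R)) := by
      have h0 : (Submodule.Quotient.mk (x - a) : QuotSMulTop F₁ R) = 0 := by
        apply hF₂
        show F₂ • (Submodule.Quotient.mk (x - a) : QuotSMulTop F₁ R) = F₂ • 0
        rw [smul_zero, ← Submodule.Quotient.mk_smul, Submodule.Quotient.mk_eq_zero]
        have : F₂ • (x - a) = z := by rw [smul_eq_mul, mul_comm]; exact hz'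
        rw [this]
        obtain ⟨b, hb⟩ := Ideal.mem_span_singleton'.mp hz
        exact (mem_rsmul_top_iff F₁ z).mpr ⟨b, by rw [mul_comm, hb]⟩
      rwa [Submodule.Quotient.mk_eq_zero] at h0
    obtain ⟨c, hc⟩ := (mem_rsmul_top_iff F₁ (x - a)).mp hmem
    have : x = a + F₁ * c := by linear_combination -hc
    rw [this]
    exact I₁.add_mem ha (I₁.mul_mem_right c h1)
  · intro x hx
    rw [Submodule.mem_colon]
    intro p hp
    obtain ⟨b, hb⟩ := Ideal.mem_span_singleton'.mp hp
    refine Submodule.mem_sup_left ?_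
    rw [← hb, smul_eq_mul]
    have : x * (b * F₂) = F₂ * (b * x) := by ring
    rw [this]
    exact Ideal.mem_span_singleton_mul.mpr ⟨b * x, I₁.mul_mem_left b hx, rfl⟩
end

section
/- Let R be a commutative ring, I_1, I_2 ideals, F_1 ∈ I_1, F_2 ∈ I_2, and suppose (F_1, F_2) is a regular sequence. Then the colon ideal (F_2 I_1 + F_1 I_2) : F_2 equals I_1 + F_1 · (I_2 : F_2). -/
/-- Colon of the liaison addition ideal:
`(F₂I₁ + F₁I₂) : F₂ = I₁ + F₁ (I₂ : F₂)`. -/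
theorem liaison_addition_colon
    {R : Type*} [CommRing R] (I₁ I₂ : Ideal R) (F₁ F₂ : R)
    (h1 : F₁ ∈ I₁) (h2 : F₂ ∈ I₂)
    (hreg : RingTheory.Sequence.IsWeaklyRegular R [F₁, F₂]) :
    (Ideal.span {F₂} * I₁ + Ideal.span {F₁} * I₂).colon (Ideal.span {F₂}) =
      I₁ + Ideal.span {F₁} * (I₂.colon (Ideal.span {F₂})) := by
  rw [RingTheory.Sequence.isWeaklyRegular_cons_iff,
      RingTheory.Sequence.isWeaklyRegular_singleton_iff] at hreg
  obtain ⟨hF₁, hF₂⟩ := hreg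
  apply le_antisymm
  · intro x hx
    rw [Ideal.mem_colon_span_singleton] at hx
    obtain ⟨p, hp, q, hq, hpq⟩ := Submodule.mem_sup.mp hx
    obtain ⟨a, ha, rfl⟩ := Ideal.mem_span_singleton_mul.mp hp
    obtain ⟨b, hb, rfl⟩ := Ideal.mem_span_singleton_mul.mp hq
    have key : (x - a) * F₂ = F₁ * b := by linear_combination -hpq
    have hmk : (Submodule.Quotient.mk (x - a) : QuotSMulTop F₁ R) = 0 := by
      apply hF₂
      show F₂ • (Submodule.Quotient.mk (x - a) : QuotSMulTop F₁ R) = F₂ • 0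
      rw [smul_zero, ← Submodule.Quotient.mk_smul, Submodule.Quotient.mk_eq_zero]
      rw [smul_eq_mul, mul_comm, key]
      exact Submodule.smul_mem_pointwise_smul b F₁ ⊤ trivial
    rw [Submodule.Quotient.mk_eq_zero, ← Submodule.ideal_span_singleton_smul,
        smul_eq_mul, Ideal.mul_top, Ideal.mem_span_singleton'] at hmk
    obtain ⟨t, ht⟩ := hmk
    have htb : t * F₂ = b := by
      apply hF₁
      simp only [smul_eq_mul]
      linear_combination F₂ * ht + key
    have hx' : x = a + F₁ * t := by linear_combination -ht
    rw [hx']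
    refine Submodule.add_mem_sup ha ?_
    exact Ideal.mul_mem_mul (Ideal.mem_span_singleton_self F₁)
      (Ideal.mem_colon_span_singleton.mpr (htb ▸ hb))
  · intro x hx
    rw [Ideal.mem_colon_span_singleton]
    obtain ⟨a, ha, q, hq, rfl⟩ := Submodule.mem_sup.mp hx
    rw [add_mul]
    refine Submodule.add_mem_sup (Ideal.mem_span_singleton_mul.mpr ⟨a, ha, (mul_comm F₂ a)⟩) ?_
    refine Submodule.smul_induction_on hq (fun r hr s hs => ?_) (fun u v hu hv => ?_)
    · rw [Ideal.mem_span_singleton] at hr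
      obtain ⟨c, rfl⟩ := hr
      rw [Ideal.mem_colon_span_singleton] at hs
      simp only [smul_eq_mul]
      refine Ideal.mem_span_singleton_mul.mpr ⟨c * (s * F₂), ?_, by ring⟩
      exact Ideal.mul_mem_left _ _ hs
    · rw [add_mul]; exact Ideal.add_mem _ hu hv
end

section
/- Let R be a commutative Noetherian ring, I_1 an ideal, F_1 ∈ I_1 and F_2 ∈ R. Then √(F_2 I_1 + (F_1)) = √I_1 ∩ √(F_1, F_2). -/
/-! Since `I₁ · (F₁, F₂) ⊆ F₂I₁ + (F₁) ⊆ I₁ ∩ (F₁, F₂)`, and the radical of a product of two ideals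
equals that of their intersection, all three ideals have the same radical. -/

namespace Ideal

variable {R : Type*} [CommRing R]

theorem radical_eq_radical_inf_of_mul_le_of_le_inf {I J K : Ideal R} (hmul : I * J ≤ K)
    (hinf : K ≤ I ⊓ J) : K.radical = I.radical ⊓ J.radical :=
  le_antisymm (radical_inf I J ▸ radical_mono hinf) (radical_mul I J ▸ radical_mono hmul)

theorem mul_span_pair_le_basicDoubleLink (I : Ideal R) (F₁ F₂ : R) :
    I * span {F₁, F₂} ≤ span {F₂} * I + span {F₁} := by
  rw [span_insert, mul_sup, sup_comm, mul_comm I (span {F₂})]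
  exact sup_le_sup_left mul_le_right _

theorem basicDoubleLink_le_inf_span_pair {I : Ideal R} {F₁ : R} (F₂ : R) (h : F₁ ∈ I) :
    span {F₂} * I + span {F₁} ≤ I ⊓ span {F₁, F₂} := by
  have hF₁ : span {F₁} ≤ span {F₁, F₂} := span_mono (by simp)
  have hF₂ : span {F₂} ≤ span {F₁, F₂} := span_mono (by simp)
  refine sup_le (le_inf mul_le_right (mul_le_left.trans hF₂)) (le_inf ?_ hF₁)
  rwa [span_singleton_le_iff_mem]

end Ideal

theorem radical_basic_double_link_general
    {R : Type*} [CommRing R]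
    (I₁ : Ideal R) (F₁ F₂ : R) (h1 : F₁ ∈ I₁) :
    (Ideal.span {F₂} * I₁ + Ideal.span {F₁}).radical =
      I₁.radical ⊓ (Ideal.span {F₁, F₂}).radical :=
  Ideal.radical_eq_radical_inf_of_mul_le_of_le_inf
    (Ideal.mul_span_pair_le_basicDoubleLink I₁ F₁ F₂) (Ideal.basicDoubleLink_le_inf_span_pair F₂ h1)

/-- The radical of the basic double link ideal `F₂I₁ + (F₁)` is `√I₁ ∩ √(F₁,F₂)`. -/
theorem radical_basic_double_link
    {R : Type*} [CommRing R] [IsNoetherianRing R]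
    (I₁ : Ideal R) (F₁ F₂ : R) (h1 : F₁ ∈ I₁) :
    (Ideal.span {F₂} * I₁ + Ideal.span {F₁}).radical =
      I₁.radical ⊓ (Ideal.span {F₁, F₂}).radical :=
  radical_basic_double_link_general I₁ F₁ F₂ h1
end
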